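/- Let L be a very full lamination system on S^1. For each point p ∈ S^1, either p is an endpoint of some leaf of L, or there exists a rainbow at p (a nested decreasing sequence {I_n} in L with ∩_n I_n = {p}); and these two alternatives are mutually exclusive. -/

import Mathlib

open Set Topology

noncomputable section

/-- Stereographic projection from `1 ∈ S¹`. -/
def sproj (z : Circle) : ℝ := (z : ℂ).im / ((z : ℂ).re - 1)

/-- `(a,b,c)` is a positively oriented triple on `S¹`. -/
def posOri (a b c : Circle) : Prop :=
  a ≠ b ∧ b ≠ c ∧ c ≠ a ∧ sproj (a⁻¹ * b) < sproj (a⁻¹ * c)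

/-- The nondegenerate open interval `(u,v)` on `S¹`. -/
def oInt (u v : Circle) : Set Circle := {p | posOri u p v}

/-- `I` is a nondegenerate open interval on `S¹`. -/
def IsND (I : Set Circle) : Prop := ∃ u v : Circle, u ≠ v ∧ I = oInt u v

/-- The dual interval `I* = (v,u)` of `I = (u,v)`, i.e. the interior of the complement. -/
def dual (I : Set Circle) : Set Circle := interior Iᶜ

/-- The leaf `{I, I*}` lies on `J`. -/
def LiesOn (I J : Set Circle) : Prop := I ⊆ J ∨ dual I ⊆ J

/-- A lamination system on `S¹`. -/
structure LamSys (L : Set (Set Circle)) : Prop where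
  nonempty : L.Nonempty
  nd : ∀ I ∈ L, IsND I
  dualMem : ∀ I ∈ L, dual I ∈ L
  unlinked : ∀ I ∈ L, ∀ J ∈ L, LiesOn I J ∨ LiesOn I (dual J)
  chainUnion : ∀ f : ℕ → Set Circle, (∀ n, f n ∈ L) → (∀ n, f n ⊆ f (n + 1)) →
    IsND (⋃ n, f n) → (⋃ n, f n) ∈ L

/-- The leaf associated to an interval. -/
def leafOf (I : Set Circle) : Set (Set Circle) := {I, dual I}

/-- `liminf` of a sequence of sets. -/
def sLiminf (f : ℕ → Set Circle) : Set Circle := ⋃ k, ⋂ n, ⋂ (_ : k ≤ n), f n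

/-- `limsup` of a sequence of sets. -/
def sLimsup (f : ℕ → Set Circle) : Set Circle := ⋂ k, ⋃ n, ⋃ (_ : k ≤ n), f n

/-- The sequence of intervals converges to `J`. -/
def ConvTo (f : ℕ → Set Circle) (J : Set Circle) : Prop :=
  J ⊆ sLiminf f ∧ sLiminf f ⊆ sLimsup f ∧ sLimsup f ⊆ closure J

/-- A gap of a lamination system. -/
def IsGap (L G : Set (Set Circle)) : Prop :=
  G ⊆ L ∧ (∀ I ∈ G, ∀ J ∈ G, I ≠ J → I ∩ J = ∅) ∧ ∀ I ∈ L, ∃ J ∈ G, LiesOn I J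

/-- A gap which is a leaf. -/
def IsLeafGap (G : Set (Set Circle)) : Prop := ∃ I, G = leafOf I

/-- The vertex (endpoint) set of a gap. -/
def vset (G : Set (Set Circle)) : Set Circle := (⋃₀ G)ᶜ

/-- A very full lamination system: every gap is an ideal polygon (finite vertex set). -/
def VeryFull (L : Set (Set Circle)) : Prop := ∀ G, IsGap L G → (vset G).Finite

/-- The set of endpoints of leaves of `L`. -/
def ELset (L : Set (Set Circle)) : Set Circle := ⋃ I ∈ L, frontier I

/-- A rainbow at `p`. -/
def Rainbow (L : Set (Set Circle)) (p : Circle) (f : ℕ → Set Circle) : Prop :=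
  (∀ n, f n ∈ L) ∧ (∀ n, f (n + 1) ⊆ f n) ∧ (⋂ n, f n) = {p}

/-- An `I`-side sequence of leaves. -/
def SideSeq (L : Set (Set Circle)) (I : Set Circle) (f : ℕ → Set Circle) : Prop :=
  (∀ n, f n ∈ L) ∧ (∀ n, I ∉ leafOf (f n)) ∧ (∀ n, LiesOn (f n) I) ∧ ConvTo f I

/-- `I` is isolated in `L`. -/
def IsolatedInt (L : Set (Set Circle)) (I : Set Circle) : Prop := ∀ f, ¬ SideSeq L I f

/-- `C_p^I`. -/
def Cset (L : Set (Set Circle)) (p : Circle) (I : Set Circle) : Set (Set Circle) :=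
  {J ∈ L | p ∈ J ∧ J ⊆ I}

/-- The group of self-homeomorphisms of the circle (composition as multiplication). -/
instance : Group (Circle ≃ₜ Circle) where
  mul g h := h.trans g
  one := Homeomorph.refl _
  inv := Homeomorph.symm
  mul_assoc _ _ _ := Homeomorph.ext fun _ => rfl
  one_mul _ := Homeomorph.ext fun _ => rfl
  mul_one _ := Homeomorph.ext fun _ => rfl
  inv_mul_cancel g := Homeomorph.ext fun x => g.symm_apply_apply x

/-- An orientation-preserving homeomorphism of the circle. -/
def OrientPres (g : Circle ≃ₜ Circle) : Prop :=
  ∀ a b c, posOri a b c → posOri (g a) (g b) (g c)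

/-- `L` is invariant under a subgroup `G` of homeomorphisms. -/
def GInv (G : Subgroup (Circle ≃ₜ Circle)) (L : Set (Set Circle)) : Prop :=
  ∀ g ∈ G, ∀ I ∈ L, (⇑g) '' I ∈ L

/-- The image of a gap under a homeomorphism. -/
def gapIm (g : Circle ≃ₜ Circle) (P : Set (Set Circle)) : Set (Set Circle) :=
  (fun I => (⇑g) '' I) '' P

/-- `v_G(P)`, the union of the vertex sets of the `G`-orbit of the gap `P`. -/
def vOrb (G : Subgroup (Circle ≃ₜ Circle)) (P : Set (Set Circle)) : Set Circle :=
  ⋃ g ∈ G, vset (gapIm g P)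

/-- A loose lamination system: distinct non-leaf gaps have disjoint vertex sets. -/
def Loose (L : Set (Set Circle)) : Prop :=
  ∀ P Q, IsGap L P → IsGap L Q → ¬ IsLeafGap P → ¬ IsLeafGap Q → P ≠ Q →
    vset P ∩ vset Q = ∅

/-- A pseudo-fibered triple `(L₁, L₂, G)`. -/
structure PFib (L₁ L₂ : Set (Set Circle)) (G : Subgroup (Circle ≃ₜ Circle)) : Prop where
  orient : ∀ g ∈ G, OrientPres g
  fg : G.FG
  lam₁ : LamSys L₁
  lam₂ : LamSys L₂
  inv₁ : GInv G L₁
  inv₂ : GInv G L₂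
  veryFull₁ : VeryFull L₁
  veryFull₂ : VeryFull L₂
  loose₁ : Loose L₁
  loose₂ : Loose L₂
  disjEnds : ELset L₁ ∩ ELset L₂ = ∅

/-!
Every leaf is an arc in the angular coordinate `turn p t = p · exp (i t)` around a point `p`.

If `p` is an endpoint of a leaf `I`, every interval of a rainbow at `p` contains `p`, so by
unlinkedness it contains `I` or `I*`; one of these would then lie in the intersection `{p}`.

If `p` is not an endpoint, the leaves `K` with `p ∈ K*` are pairwise nested or disjoint. By
Lindelöf a chain of them has the same union as an increasing sequence, and that union is either
`S¹ \ {p}`, in which case the duals form a rainbow, or again such a leaf (an arc ending at `p`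
would make `p` an endpoint). So without a rainbow Zorn's lemma gives maximal such leaves; they
form a gap, and its vertex set contains every point between `p` and the nearest left end of a
maximal leaf, contradicting very fullness.
-/

open Real

def turn (u : Circle) (t : ℝ) : Circle := u * Circle.exp t

@[simp] lemma turn_zero (u : Circle) : turn u 0 = u := by simp [turn]

@[simp] lemma turn_two_pi (u : Circle) : turn u (2 * π) = u := by simp [turn]

lemma inv_turn_mul_turn (u : Circle) (a t : ℝ) :
    (turn u a)⁻¹ * turn u t = Circle.exp (t - a) := by
  rw [turn, turn, Circle.exp_sub, mul_inv_rev, mul_assoc, inv_mul_cancel_left, div_eq_inv_mul]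

lemma continuous_turn (u : Circle) : Continuous (turn u) :=
  continuous_const.mul Circle.exp.continuous

lemma turn_bijOn (u : Circle) (a : ℝ) : BijOn (turn u) (Ico a (a + 2 * π)) univ := by
  refine ⟨fun _ _ => mem_univ _, fun s hs t ht h => ?_, fun x _ => ?_⟩
  · exact Circle.exp_injOn_Ico (by linarith) hs ht (mul_left_cancel h)
  · obtain ⟨s, hs⟩ := Circle.exp_surjective (u⁻¹ * x)
    refine ⟨toIcoMod two_pi_pos a s, toIcoMod_mem_Ico _ _ _, ?_⟩
    have : Circle.exp (toIcoMod two_pi_pos a s) = Circle.exp s :=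
      Circle.exp_eq_exp.2 ⟨-toIcoDiv two_pi_pos a s, by
        rw [toIcoMod, zsmul_eq_mul, Int.cast_neg]; ring⟩
    rw [turn, this, hs, mul_inv_cancel_left]

lemma sproj_exp {s : ℝ} (h0 : 0 < s) (h2 : s < 2 * π) :
    sproj (Circle.exp s) = Real.tan (s / 2 - π / 2) := by
  have hsin : Real.sin (s / 2) ≠ 0 :=
    (Real.sin_pos_of_pos_of_lt_pi (by linarith) (by linarith)).ne'
  have hs : s = 2 * (s / 2) := by ring
  rw [sproj, Circle.coe_exp, Complex.exp_ofReal_mul_I_re, Complex.exp_ofReal_mul_I_im,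
    Real.tan_eq_sin_div_cos, Real.sin_sub_pi_div_two, Real.cos_sub_pi_div_two, hs,
    Real.sin_two_mul, Real.cos_two_mul, ← hs]
  have := Real.sin_sq_add_cos_sq (s / 2)
  rw [div_eq_div_iff (by nlinarith [sq_pos_of_ne_zero hsin]) hsin]
  linear_combination (2 * Real.cos (s / 2)) * this

lemma sproj_exp_lt_sproj_exp_iff {s t : ℝ} (hs : s ∈ Ioo 0 (2 * π))
    (ht : t ∈ Ioo 0 (2 * π)) :
    sproj (Circle.exp s) < sproj (Circle.exp t) ↔ s < t := by
  rw [sproj_exp hs.1 hs.2, sproj_exp ht.1 ht.2,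
    Real.strictMonoOn_tan.lt_iff_lt ⟨by linarith [hs.1], by linarith [hs.2]⟩
      ⟨by linarith [ht.1], by linarith [ht.2]⟩]
  constructor <;> intro h <;> linarith

lemma oInt_turn (u : Circle) {a c : ℝ} (hac : a < c) (hca : c < a + 2 * π) :
    oInt (turn u a) (turn u c) = turn u '' Ioo a c := by
  ext x
  have inj := (turn_bijOn u a).injOn
  obtain ⟨t, ht, rfl⟩ := (turn_bijOn u a).surjOn (mem_univ x)
  have hc : c ∈ Ico a (a + 2 * π) := ⟨hac.le, hca⟩
  rw [inj.mem_image_iff (Ioo_subset_Ico_self.trans (Ico_subset_Ico_right hca.le)) ht]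
  simp only [oInt, posOri, mem_ofPred_eq, inv_turn_mul_turn, mem_Ioo]
  constructor
  · rintro ⟨hat, -, -, hlt⟩
    have hta : a < t := ht.1.lt_of_ne fun h => hat (h ▸ rfl)
    rw [sproj_exp_lt_sproj_exp_iff ⟨by linarith, by linarith [ht.2]⟩
      ⟨by linarith, by linarith⟩] at hlt
    exact ⟨hta, by linarith⟩
  · rintro ⟨hat, htc⟩
    refine ⟨fun h => hat.ne (inj ⟨le_rfl, by linarith⟩ ht h), fun h => htc.ne (inj ht hc h),
      fun h => hac.ne' (inj hc ⟨le_rfl, by linarith⟩ h), ?_⟩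
    rw [sproj_exp_lt_sproj_exp_iff ⟨by linarith, by linarith [ht.2]⟩
      ⟨by linarith, by linarith⟩]
    linarith

lemma closure_turn_image_Ioo (u : Circle) {a c : ℝ} (hac : a < c) :
    closure (turn u '' Ioo a c) = turn u '' Icc a c := by
  refine (closure_minimal (image_mono Ioo_subset_Icc_self)
    (isCompact_Icc.image (continuous_turn u)).isClosed).antisymm ?_
  rw [← closure_Ioo hac.ne]
  exact image_closure_subset_closure_image (continuous_turn u)

lemma dual_turn_image_Ioo (u : Circle) {a c : ℝ} (hac : a < c) (hca : c < a + 2 * π) :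
    dual (turn u '' Ioo a c) = turn u '' Ioo c (a + 2 * π) := by
  have hdiff : Ico a (a + 2 * π) \ Icc a c = Ioo c (a + 2 * π) := by
    ext t
    simp only [mem_sdiff, mem_Ico, mem_Icc, mem_Ioo, not_and, not_le]
    constructor
    · rintro ⟨⟨h1, h2⟩, h3⟩; exact ⟨h3 h1, h2⟩
    · rintro ⟨h1, h2⟩; exact ⟨⟨by linarith, h2⟩, fun _ => h1⟩
  rw [dual, interior_compl, closure_turn_image_Ioo u hac, ← hdiff,
    (turn_bijOn u a).injOn.image_sdiff_subset (Icc_subset_Ico_right hca),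
    (turn_bijOn u a).image_eq, compl_eq_univ_sdiff]

lemma exists_oInt_eq_turn_image {u v : Circle} (huv : u ≠ v) :
    ∃ b ∈ Ioo 0 (2 * π), v = turn u b ∧ oInt u v = turn u '' Ioo 0 b := by
  obtain ⟨b, hb, rfl⟩ := (turn_bijOn u 0).surjOn (mem_univ v)
  rw [zero_add] at hb
  have hb0 : 0 < b := hb.1.lt_of_ne fun h => huv (by rw [← h, turn_zero])
  refine ⟨b, ⟨hb0, hb.2⟩, rfl, ?_⟩
  simpa using oInt_turn u hb0 (by linarith [hb.2] : b < 0 + 2 * π)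

lemma dual_oInt {u v : Circle} (huv : u ≠ v) : dual (oInt u v) = oInt v u := by
  obtain ⟨b, hb, rfl, hI⟩ := exists_oInt_eq_turn_image huv
  rw [hI, dual_turn_image_Ioo u hb.1 (by linarith [hb.2]), zero_add]
  simpa using (oInt_turn u hb.2 (by linarith [hb.1] : 2 * π < b + 2 * π)).symm

lemma isOpen_oInt {u v : Circle} (huv : u ≠ v) : IsOpen (oInt u v) := by
  rw [← dual_oInt huv.symm]
  exact isOpen_interior

lemma oInt_nonempty {u v : Circle} (huv : u ≠ v) : (oInt u v).Nonempty := by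
  obtain ⟨b, hb, -, hI⟩ := exists_oInt_eq_turn_image huv
  rw [hI]
  exact (nonempty_Ioo.2 hb.1).image _

lemma turn_image_Ioo_subset_iff (p : Circle) {a c a' c' : ℝ} (ha : 0 ≤ a) (hc : c ≤ 2 * π)
    (ha' : 0 ≤ a') (hc' : c' ≤ 2 * π) :
    turn p '' Ioo a c ⊆ turn p '' Ioo a' c' ↔ Ioo a c ⊆ Ioo a' c' := by
  have hsub {x y : ℝ} (hx : 0 ≤ x) (hy : y ≤ 2 * π) : Ioo x y ⊆ Ico 0 (0 + 2 * π) :=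
    fun t ht => ⟨by linarith [ht.1], by linarith [ht.2]⟩
  exact (turn_bijOn p 0).injOn.image_subset_image_iff (hsub ha hc) (hsub ha' hc')

lemma iUnion_Ioo_eq_Ioo_iInf_iSup {a c : ℕ → ℝ} (ha : Antitone a) (hc : Monotone c)
    (ha_bdd : BddBelow (range a)) (hc_bdd : BddAbove (range c)) :
    ⋃ n, Ioo (a n) (c n) = Ioo (⨅ n, a n) (⨆ n, c n) := by
  ext t
  simp only [mem_iUnion, mem_Ioo]
  constructor
  · rintro ⟨n, h1, h2⟩
    exact ⟨(ciInf_le ha_bdd n).trans_lt h1, h2.trans_le (le_ciSup hc_bdd n)⟩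
  · rintro ⟨h1, h2⟩
    obtain ⟨m, hm⟩ := exists_lt_of_ciInf_lt h1
    obtain ⟨n, hn⟩ := exists_lt_of_lt_ciSup h2
    exact ⟨max m n, (ha (le_max_left m n)).trans_lt hm, hn.trans_le (hc (le_max_right m n))⟩

lemma IsChain.exists_monotone_iUnion_eq {α : Type*} [TopologicalSpace α]
    [SecondCountableTopology α] {𝒞 : Set (Set α)} (hc : IsChain (· ⊆ ·) 𝒞)
    (hne : 𝒞.Nonempty) (ho : ∀ s ∈ 𝒞, IsOpen s) :
    ∃ f : ℕ → Set α, (∀ n, f n ∈ 𝒞) ∧ Monotone f ∧ ⋃ n, f n = ⋃₀ 𝒞 := by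
  obtain ⟨T, hTc, hT𝒞, hTU⟩ := TopologicalSpace.isOpen_sUnion_countable 𝒞 ho
  obtain ⟨s, hs⟩ := hne
  obtain ⟨e, he⟩ := (hTc.insert s).exists_eq_range (insert_nonempty s T)
  have he𝒞 n : e n ∈ 𝒞 := insert_subset hs hT𝒞 (he ▸ mem_range_self n)
  -- in a chain, a finite union is the largest of its members
  refine ⟨partialSups e, fun n => ?_, (partialSups e).monotone, ?_⟩
  · induction n with
    | zero => simpa using he𝒞 0
    | succ n ih =>
      rw [partialSups_add_one]
      rcases hc.total ih (he𝒞 (n + 1)) with h | h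
      · rw [sup_of_le_right h]; exact he𝒞 (n + 1)
      · rwa [sup_of_le_left h]
  · change ⨆ n, partialSups e n = _
    rw [iSup_partialSups_eq]
    change ⋃ n, e n = _
    rw [← sUnion_range, ← he, sUnion_insert, hTU]
    exact union_eq_right.2 (subset_sUnion_of_mem hs)

lemma dual_eq_compl_closure (I : Set Circle) : dual I = (closure I)ᶜ := interior_compl

lemma dual_subset_dual {I J : Set Circle} (h : I ⊆ J) : dual J ⊆ dual I :=
  interior_mono (compl_subset_compl.2 h)

lemma disjoint_dual (I : Set Circle) : Disjoint I (dual I) :=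
  disjoint_compl_right.mono_right interior_subset

lemma notMem_dual_of_mem_closure {I : Set Circle} {p : Circle} (hp : p ∈ closure I) :
    p ∉ dual I := by
  rw [dual_eq_compl_closure]
  exact fun h => h hp

def awayFrom (L : Set (Set Circle)) (p : Circle) : Set (Set Circle) := {K ∈ L | p ∈ dual K}

namespace LamSys

variable {L : Set (Set Circle)} {p : Circle} {I : Set Circle}

lemma isOpen (hL : LamSys L) (hI : I ∈ L) : IsOpen I := by
  obtain ⟨u, v, huv, rfl⟩ := hL.nd I hI
  exact isOpen_oInt huv

lemma dual_dual (hL : LamSys L) (hI : I ∈ L) : dual (dual I) = I := by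
  obtain ⟨u, v, huv, rfl⟩ := hL.nd I hI
  rw [dual_oInt huv, dual_oInt huv.symm]

lemma nonempty_of_mem (hL : LamSys L) (hI : I ∈ L) : I.Nonempty := by
  obtain ⟨u, v, huv, rfl⟩ := hL.nd I hI
  exact oInt_nonempty huv

lemma mem_or_mem_dual (hL : LamSys L) (hp : p ∉ ELset L) (hI : I ∈ L) :
    p ∈ I ∨ p ∈ dual I := by
  have hfr : p ∉ closure I \ I := by
    rw [← (hL.isOpen hI).frontier_eq]
    exact fun h => hp (mem_biUnion hI h)
  rw [dual_eq_compl_closure]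
  by_cases h : p ∈ I
  · exact Or.inl h
  · exact Or.inr fun hc => hfr ⟨hc, h⟩

lemma subset_or_dual_subset_of_mem_frontier (hL : LamSys L) {J : Set Circle} (hI : I ∈ L)
    (hJ : J ∈ L) (hpI : p ∈ frontier I) (hpJ : p ∈ J) : I ⊆ J ∨ dual I ⊆ J := by
  rw [(hL.isOpen hI).frontier_eq] at hpI
  have hpd := notMem_dual_of_mem_closure hpI.1
  rcases hL.unlinked J hJ I hI with (h | h) | (h | h)
  · exact absurd (h hpJ) hpI.2
  · exact Or.inr (hL.dual_dual hJ ▸ dual_subset_dual h)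
  · exact absurd (h hpJ) hpd
  · exact Or.inl (hL.dual_dual hI ▸ hL.dual_dual hJ ▸ dual_subset_dual h)

lemma not_rainbow_of_mem_ELset (hL : LamSys L) (hp : p ∈ ELset L) (f : ℕ → Set Circle) :
    ¬ Rainbow L p f := by
  rintro ⟨hfL, hf, hfp⟩
  obtain ⟨I, hI, hpI⟩ := mem_iUnion₂.1 hp
  have hanti : Antitone f := antitone_nat_of_succ_le hf
  have hpf : ∀ n, p ∈ f n := fun n => mem_iInter.1 (hfp.symm ▸ rfl : p ∈ ⋂ n, f n) n
  have hcases n := hL.subset_or_dual_subset_of_mem_frontier hI (hfL n) hpI (hpf n)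
  rw [(hL.isOpen hI).frontier_eq] at hpI
  have hpd := notMem_dual_of_mem_closure hpI.1
  have hnot_subset : ∀ J ∈ L, p ∉ J → ∃ n, ¬ J ⊆ f n := by
    intro J hJ hpJ
    by_contra! h
    obtain ⟨x, hx⟩ := hL.nonempty_of_mem hJ
    have : x ∈ ⋂ n, f n := mem_iInter.2 fun n => h n hx
    rw [hfp, mem_singleton_iff] at this
    exact hpJ (this ▸ hx)
  obtain ⟨m, hm⟩ := hnot_subset I hI hpI.2
  obtain ⟨n, hn⟩ := hnot_subset (dual I) (hL.dualMem I hI) hpd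
  rcases hcases (max m n) with h | h
  · exact hm (h.trans (hanti (le_max_left m n)))
  · exact hn (h.trans (hanti (le_max_right m n)))

lemma mem_awayFrom_or_dual_mem (hL : LamSys L) (hp : p ∉ ELset L) (hI : I ∈ L) :
    I ∈ awayFrom L p ∨ dual I ∈ awayFrom L p := by
  rcases hL.mem_or_mem_dual hp hI with h | h
  · exact Or.inr ⟨hL.dualMem I hI, by rwa [hL.dual_dual hI]⟩
  · exact Or.inl ⟨hI, h⟩

lemma subset_or_subset_or_disjoint (hL : LamSys L) {K₁ K₂ : Set Circle}
    (h₁ : K₁ ∈ awayFrom L p) (h₂ : K₂ ∈ awayFrom L p) :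
    K₁ ⊆ K₂ ∨ K₂ ⊆ K₁ ∨ Disjoint K₁ K₂ := by
  rcases hL.unlinked K₁ h₁.1 K₂ h₂.1 with (h | h) | (h | h)
  · exact Or.inl h
  · exact absurd (h h₁.2) ((disjoint_dual K₂).notMem_of_mem_right h₂.2)
  · exact Or.inr (Or.inr ((disjoint_dual K₂).symm.mono_left h))
  · exact Or.inr (Or.inl (hL.dual_dual h₁.1 ▸ hL.dual_dual h₂.1 ▸ dual_subset_dual h))

lemma exists_eq_turn_image_of_mem_awayFrom (hL : LamSys L) {K : Set Circle}
    (hK : K ∈ awayFrom L p) :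
    ∃ a c, 0 < a ∧ a < c ∧ c < 2 * π ∧ K = turn p '' Ioo a c := by
  obtain ⟨hKL, hp⟩ := hK
  obtain ⟨u, v, huv, rfl⟩ := hL.nd K hKL
  rw [dual_oInt huv] at hp
  have inj := (turn_bijOn p 0).injOn
  obtain ⟨a, ha, rfl⟩ := (turn_bijOn p 0).surjOn (mem_univ u)
  obtain ⟨c, hc, rfl⟩ := (turn_bijOn p 0).surjOn (mem_univ v)
  rw [zero_add] at ha hc
  have hne {t : ℝ} (ht : t ∈ Ico 0 (2 * π)) (hpt : p ≠ turn p t) : 0 < t :=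
    ht.1.lt_of_ne fun h => hpt (by rw [← h, turn_zero])
  have ha0 := hne ha hp.2.1
  have hc0 := hne hc hp.1.symm
  rcases lt_or_gt_of_ne fun h : a = c => huv (h ▸ rfl) with hac | hca
  · exact ⟨a, c, ha0, hac, hc.2, oInt_turn p hac (by linarith [hc.2])⟩
  · -- then `dual K` is the arc of coordinates `(c, a)`, which misses `p = turn p 0`
    rw [oInt_turn p hca (by linarith [ha.2])] at hp
    obtain ⟨t, ht, hpt⟩ := hp
    have : t = 0 := inj ⟨by linarith [ht.1], by linarith [ht.2, ha.2]⟩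
      ⟨le_rfl, by linarith [pi_pos]⟩ (hpt.trans (turn_zero p).symm)
    linarith [ht.1]

lemma iUnion_eq_compl_singleton_or_isND (hL : LamSys L) {f : ℕ → Set Circle}
    (hf : ∀ n, f n ∈ awayFrom L p) (hmono : Monotone f) :
    ⋃ n, f n = {p}ᶜ ∨ IsND (⋃ n, f n) := by
  choose a c ha hac hc hfac using fun n => hL.exists_eq_turn_image_of_mem_awayFrom (hf n)
  have hsub {m n : ℕ} (h : m ≤ n) : Ioo (a m) (c m) ⊆ Ioo (a n) (c n) := by
    have := hmono h
    rwa [hfac, hfac, turn_image_Ioo_subset_iff p (ha m).le (hc m).le (ha n).le (hc n).le] at this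
  have hanti : Antitone a := fun m n h => ((Ioo_subset_Ioo_iff (hac m)).1 (hsub h)).1
  have hmono' : Monotone c := fun m n h => ((Ioo_subset_Ioo_iff (hac m)).1 (hsub h)).2
  have hbdd : BddBelow (range a) := ⟨0, forall_mem_range.2 fun n => (ha n).le⟩
  have hbdd' : BddAbove (range c) := ⟨2 * π, forall_mem_range.2 fun n => (hc n).le⟩
  have hU : ⋃ n, f n = turn p '' Ioo (⨅ n, a n) (⨆ n, c n) := by
    simp_rw [hfac, ← image_iUnion]
    rw [iUnion_Ioo_eq_Ioo_iInf_iSup hanti hmono' hbdd hbdd']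
  have hr0 : 0 ≤ ⨅ n, a n := le_ciInf fun n => (ha n).le
  have hrl : ⨅ n, a n < ⨆ n, c n :=
    ((ciInf_le hbdd 0).trans_lt (hac 0)).trans_le (le_ciSup hbdd' 0)
  have hl : ⨆ n, c n ≤ 2 * π := ciSup_le fun n => (hc n).le
  rw [hU]
  by_cases hdeg : ⨅ n, a n = 0 ∧ ⨆ n, c n = 2 * π
  · left
    have : Ioo 0 (2 * π) = Ico 0 (0 + 2 * π) \ {0} := by
      rw [zero_add, Ico_sdiff_left]
    rw [hdeg.1, hdeg.2, this, (turn_bijOn p 0).injOn.image_sdiff_subset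
      (singleton_subset_iff.2 ⟨le_rfl, by linarith [pi_pos]⟩), (turn_bijOn p 0).image_eq,
      image_singleton, turn_zero, compl_eq_univ_sdiff]
  · right
    have hlr : ⨆ n, c n < (⨅ n, a n) + 2 * π := by
      by_contra! h
      exact hdeg ⟨by linarith, by linarith⟩
    refine ⟨_, _, fun h => hrl.ne ((turn_bijOn p _).injOn ⟨le_rfl, by linarith⟩
      ⟨hrl.le, hlr⟩ h), (oInt_turn p hrl hlr).symm⟩

lemma rainbow_dual_of_iUnion_eq_compl (hL : LamSys L) {f : ℕ → Set Circle}
    (hf : ∀ n, f n ∈ awayFrom L p) (hmono : Monotone f) (hU : ⋃ n, f n = {p}ᶜ) :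
    Rainbow L p fun n => dual (f n) := by
  refine ⟨fun n => hL.dualMem _ (hf n).1, fun n => dual_subset_dual (hmono n.le_succ), ?_⟩
  refine eq_singleton_iff_unique_mem.2 ⟨mem_iInter.2 fun n => (hf n).2, fun x hx => ?_⟩
  by_contra hxp
  obtain ⟨n, hxn⟩ := mem_iUnion.1 (hU.symm ▸ hxp : x ∈ ⋃ n, f n)
  exact (disjoint_dual (f n)).notMem_of_mem_left hxn (mem_iInter.1 hx n)

lemma sUnion_mem_awayFrom (hL : LamSys L) (hp : p ∉ ELset L) (hR : ¬ ∃ f, Rainbow L p f)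
    {𝒞 : Set (Set Circle)} (h𝒞 : 𝒞 ⊆ awayFrom L p) (hc : IsChain (· ⊆ ·) 𝒞)
    (hne : 𝒞.Nonempty) : ⋃₀ 𝒞 ∈ awayFrom L p := by
  obtain ⟨f, hf𝒞, hmono, hU⟩ :=
    hc.exists_monotone_iUnion_eq hne fun s hs => hL.isOpen (h𝒞 hs).1
  have hf n : f n ∈ awayFrom L p := h𝒞 (hf𝒞 n)
  rw [← hU]
  rcases hL.iUnion_eq_compl_singleton_or_isND hf hmono with hcompl | hND
  · exact absurd ⟨_, hL.rainbow_dual_of_iUnion_eq_compl hf hmono hcompl⟩ hR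
  have hUL : ⋃ n, f n ∈ L := hL.chainUnion f (fun n => (hf n).1) (fun n => hmono n.le_succ) hND
  refine ⟨hUL, (hL.mem_or_mem_dual hp hUL).resolve_left fun hpU => ?_⟩
  obtain ⟨n, hpn⟩ := mem_iUnion.1 hpU
  exact (disjoint_dual (f n)).notMem_of_mem_left hpn (hf n).2

lemma isGap_maximal_awayFrom (hL : LamSys L) (hp : p ∉ ELset L) (hR : ¬ ∃ f, Rainbow L p f) :
    IsGap L {K | Maximal (· ∈ awayFrom L p) K} := by
  have hmax := zorn_subset_nonempty (awayFrom L p) fun 𝒞 h𝒞 hc hne =>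
    ⟨⋃₀ 𝒞, hL.sUnion_mem_awayFrom hp hR h𝒞 hc hne, fun _ => subset_sUnion_of_mem⟩
  refine ⟨fun K hK => hK.prop.1, fun K₁ h₁ K₂ h₂ hne => ?_, fun I hI => ?_⟩
  · rcases hL.subset_or_subset_or_disjoint h₁.prop h₂.prop with h | h | h
    · exact absurd (h₁.eq_of_subset h₂.prop h) hne
    · exact absurd (h₂.eq_of_subset h₁.prop h).symm hne
    · exact h.inter_eq
  · rcases hL.mem_awayFrom_or_dual_mem hp hI with h | h
    · obtain ⟨M, hIM, hM⟩ := hmax I h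
      exact ⟨M, hM, Or.inl hIM⟩
    · obtain ⟨M, hIM, hM⟩ := hmax _ h
      exact ⟨M, hM, Or.inr hIM⟩

lemma frontier_subset_vset (hL : LamSys L) {G : Set (Set Circle)} (hG : IsGap L G)
    {M : Set Circle} (hM : M ∈ G) : frontier M ⊆ vset G := by
  intro x hx ⟨M', hM', hxM'⟩
  rw [(hL.isOpen (hG.1 hM)).frontier_eq] at hx
  have hmeet : (M' ∩ M).Nonempty := mem_closure_iff.1 hx.1 M' (hL.isOpen (hG.1 hM')) hxM'
  by_cases heq : M' = M
  · exact hx.2 (heq ▸ hxM')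
  · exact hmeet.ne_empty (hG.2.1 M' hM' M hM heq)

-- The left ends of the members of `G` are vertices, and so is every point between `p` and the
-- first of them.
lemma vset_infinite_of_subset_awayFrom (hL : LamSys L) {G : Set (Set Circle)}
    (hG : IsGap L G) (hGp : G ⊆ awayFrom L p) : (vset G).Infinite := by
  intro hfin
  have inj := (turn_bijOn p 0).injOn
  set A : Set ℝ := {a | ∃ c, 0 < a ∧ a < c ∧ c < 2 * π ∧ turn p '' Ioo a c ∈ G}
  have hA : A ⊆ Ico 0 (0 + 2 * π) := fun a ⟨c, ha, hac, hc, _⟩ => ⟨ha.le, by linarith⟩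
  have hAV : turn p '' A ⊆ vset G := by
    rintro _ ⟨a, ⟨c, ha, hac, hc, hM⟩, rfl⟩
    apply hL.frontier_subset_vset hG hM
    rw [(hL.isOpen (hG.1 hM)).frontier_eq, closure_turn_image_Ioo p hac]
    refine ⟨mem_image_of_mem _ (left_mem_Icc.2 hac.le), fun h => lt_irrefl a ?_⟩
    exact ((inj.mem_image_iff (fun t ht => ⟨by linarith [ht.1], by linarith [ht.2]⟩)
      ⟨ha.le, by linarith⟩).1 h).1
  obtain ⟨m, ⟨c₀, hm, hmc₀, hc₀, -⟩, hmin⟩ : ∃ m ∈ A, ∀ a ∈ A, m ≤ a := by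
    obtain ⟨I, hI⟩ := hL.nonempty
    obtain ⟨M, hM, -⟩ := hG.2.2 I hI
    obtain ⟨a, c, ha, hac, hc, rfl⟩ := hL.exists_eq_turn_image_of_mem_awayFrom (hGp hM)
    exact exists_min_image A id ((hfin.subset hAV).of_finite_image (inj.mono hA))
      ⟨a, c, ha, hac, hc, hM⟩
  have hsmall : turn p '' Ioo 0 m ⊆ vset G := by
    rintro _ ⟨t, ht, rfl⟩ ⟨M, hM, htM⟩
    obtain ⟨a, c, ha, hac, hc, rfl⟩ := hL.exists_eq_turn_image_of_mem_awayFrom (hGp hM)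
    have := (inj.mem_image_iff (fun s hs => ⟨by linarith [hs.1], by linarith [hs.2]⟩)
      ⟨ht.1.le, by linarith [ht.2]⟩).1 htM
    linarith [hmin a (show a ∈ A from ⟨c, ha, hac, hc, hM⟩), this.1, ht.2]
  have hIoo : Ioo 0 m ⊆ Ico 0 (0 + 2 * π) := fun t ht => ⟨ht.1.le, by linarith [ht.2]⟩
  exact ((Ioo_infinite hm).image (inj.mono hIoo)) (hfin.subset hsmall)

lemma exists_rainbow (hL : LamSys L) (hvf : VeryFull L) (hp : p ∉ ELset L) :
    ∃ f, Rainbow L p f := by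
  by_contra hR
  have hG := hL.isGap_maximal_awayFrom hp hR
  exact hL.vset_infinite_of_subset_awayFrom hG (fun _ hK => hK.prop) (hvf _ hG)

end LamSys

end

/-- In a very full lamination system, every point of `S¹` is either an endpoint of a leaf
or has a rainbow, and not both. -/
theorem stmt11 (L : Set (Set Circle)) (hL : LamSys L) (hvf : VeryFull L) (p : Circle) :
    Xor' (p ∈ ELset L) (∃ f, Rainbow L p f) := by
  by_cases hp : p ∈ ELset L
  · exact Or.inl ⟨hp, fun ⟨f, hf⟩ => hL.not_rainbow_of_mem_ELset hp f hf⟩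
  · exact Or.inr ⟨hL.exists_rainbow hvf hp, hp⟩
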